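/- Let Q(R) = Σ_{i=1}^N max_{1≤j≤M} [∠(R s_i, c_j) ≤ α_ε] and let Q̄(B) = Σ_{i=1}^N max_{1≤j≤M} [∠(R_u s_i, c_j) ≤ α_ε + α_B], where B is a cube with center u and half-diagonal α_B. Then Q̄(B) ≥ max_{r ∈ B} Q(R_r). -/

import Mathlib

open scoped Matrix
open InnerProductGeometry
noncomputable section

abbrev E3 := EuclideanSpace ℝ (Fin 3)

/-- Skew-symmetric cross-product matrix of `r`. -/
def skew (r : E3) : Matrix (Fin 3) (Fin 3) ℝ :=
  !![0, -r 2, r 1; r 2, 0, -r 0; -r 1, r 0, 0]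

attribute [local instance] Matrix.linftyOpNormedRing Matrix.linftyOpNormedAlgebra in
/-- Axis-angle (exponential) map: rotation by angle `‖r‖` about axis `r/‖r‖`. -/
def axisAngleRot (r : E3) : Matrix (Fin 3) (Fin 3) ℝ :=
  NormedSpace.exp (skew r)

/-- Action of a `3×3` matrix on a vector of `EuclideanSpace ℝ (Fin 3)`. -/
def rotApply (R : Matrix (Fin 3) (Fin 3) ℝ) (s : E3) : E3 :=
  (EuclideanSpace.equiv (Fin 3) ℝ).symm (R.mulVec (EuclideanSpace.equiv (Fin 3) ℝ s))

/-!
By the triangle inequality for angles, `∠(R_u s, c) ≤ ∠(R_u s, R_r s) + ∠(R_r s, c)`, so every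
indicator of `Q(R_r)` is dominated by the corresponding one of `Q̄(B)` once
`∠(R_u s, R_r s) ≤ ‖u - r‖`.

On the unit sphere the angle agrees with the chord `‖x - y‖` up to `O(‖x - y‖³)`, so a
`K`-Lipschitz path on the sphere, cut into `n` pieces, joins endpoints at angle at most
`K + O(K³ / n²)`, hence at most `K`. The path `t ↦ exp (S (r + t (u - r))) s`, where `S v` is the
skew-adjoint operator `x ↦ v × x`, is `‖u - r‖`-Lipschitz: in a C⋆-algebra
`‖exp a - exp b‖ ≤ ‖a - b‖` for skew-adjoint `a, b`, because `t ↦ exp (t a) exp ((1 - t) b)` has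
derivative `exp (t a) (a - b) exp ((1 - t) b)` and its outer factors are unitary.
-/

open NormedSpace Real Filter Topology
open scoped NNReal

section UnitVectors

variable {V : Type*} [NormedAddCommGroup V] [InnerProductSpace ℝ V]

theorem norm_sub_eq_two_mul_sin_half_angle {x y : V} (hx : ‖x‖ = 1) (hy : ‖y‖ = 1) :
    ‖x - y‖ = 2 * sin (angle x y / 2) := by
  have hsin : 0 ≤ sin (angle x y / 2) := sin_nonneg_of_nonneg_of_le_pi
    (by linarith [angle_nonneg x y]) (by linarith [angle_le_pi x y, pi_pos])
  have hcos : cos (angle x y) = 1 - 2 * sin (angle x y / 2) ^ 2 := by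
    have h := cos_two_mul' (angle x y / 2)
    rw [mul_div_cancel₀ _ two_ne_zero] at h
    linarith [cos_sq_add_sin_sq (angle x y / 2)]
  refine (sq_eq_sq₀ (norm_nonneg _) (by positivity)).1 ?_
  rw [sq, norm_sub_sq_eq_norm_sq_add_norm_sq_sub_two_mul_norm_mul_norm_mul_cos_angle, hx, hy,
    hcos]
  ring

theorem angle_le_norm_sub_add_norm_sub_pow_three {x y : V} (hx : ‖x‖ = 1) (hy : ‖y‖ = 1) :
    angle x y ≤ ‖x - y‖ + ‖x - y‖ ^ 3 := by
  set θ := angle x y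
  set s := sin (θ / 2)
  have hθ : 0 ≤ θ / 2 := by linarith [angle_nonneg x y]
  rw [norm_sub_eq_two_mul_sin_half_angle hx hy]
  have hlin : θ ≤ π * s := by
    have := mul_le_sin hθ (by linarith [angle_le_pi x y])
    rwa [show 2 / π * (θ / 2) = θ / π by ring, div_le_iff₀' pi_pos] at this
  have hs : 0 ≤ s := by nlinarith [pi_pos]
  have hcube : θ ^ 3 ≤ (4 * s) ^ 3 :=
    pow_le_pow_left₀ (by linarith) (hlin.trans (by nlinarith [pi_lt_four])) 3
  nlinarith [sin_ge_sub_cube hθ, pow_nonneg hs 3]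

theorem angle_le_sum_range_angle (q : ℕ → V) (n : ℕ) :
    angle (q 0) (q (n + 1)) ≤ ∑ k ∈ Finset.range (n + 1), angle (q k) (q (k + 1)) := by
  induction n with
  | zero => simp
  | succ n ih =>
    rw [Finset.sum_range_succ]
    exact (angle_le_angle_add_angle _ (q (n + 1)) _).trans (by gcongr)

theorem angle_le_of_lipschitzWith {γ : ℝ → V} {K : ℝ≥0} (hγ : ∀ t, ‖γ t‖ = 1)
    (hK : LipschitzWith K γ) : angle (γ 0) (γ 1) ≤ K := by
  have hsubdiv (n : ℕ) : angle (γ 0) (γ 1) ≤ K + K ^ 3 * (1 / ((n : ℝ) + 1)) ^ 2 := by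
    set h : ℝ := 1 / ((n : ℝ) + 1)
    set q : ℕ → V := fun k => γ (k * h)
    have hstep (k : ℕ) : ‖q k - q (k + 1)‖ ≤ K * h := by
      rw [← dist_eq_norm]
      refine (hK.dist_le_mul _ _).trans_eq ?_
      rw [Real.dist_eq, Nat.cast_succ, ← sub_mul, sub_add_cancel_left, neg_one_mul, abs_neg,
        abs_of_pos (by positivity)]
    calc angle (γ 0) (γ 1) = angle (q 0) (q (n + 1)) := by
          simp only [q, h, Nat.cast_zero, zero_mul, Nat.cast_succ,
            mul_one_div_cancel (by positivity : (n : ℝ) + 1 ≠ 0)]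
      _ ≤ ∑ k ∈ Finset.range (n + 1), angle (q k) (q (k + 1)) := angle_le_sum_range_angle q n
      _ ≤ ∑ k ∈ Finset.range (n + 1), (K * h + (K * h) ^ 3) := by
          gcongr with k
          refine (angle_le_norm_sub_add_norm_sub_pow_three (hγ _) (hγ _)).trans ?_
          gcongr <;> exact hstep k
      _ = K + K ^ 3 * h ^ 2 := by
          simp only [Finset.sum_const, Finset.card_range, nsmul_eq_mul, h, Nat.cast_succ]
          field_simp
  have hlim : Tendsto (fun n : ℕ => (K : ℝ) + K ^ 3 * (1 / ((n : ℝ) + 1)) ^ 2) atTop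
      (𝓝 (K : ℝ)) := by
    simpa using
      ((tendsto_one_div_add_atTop_nhds_zero_nat.pow 2).const_mul ((K : ℝ) ^ 3)).const_add (K : ℝ)
  exact ge_of_tendsto' hlim hsubdiv

end UnitVectors

section SkewAdjoint

variable {𝔸 : Type*} [NormedRing 𝔸] [NormedAlgebra ℝ 𝔸] [CompleteSpace 𝔸] [StarRing 𝔸]
  [CStarRing 𝔸]

theorem norm_exp_le_one_of_mem_skewAdjoint {a : 𝔸} (ha : a ∈ skewAdjoint 𝔸) :
    ‖exp a‖ ≤ 1 := by
  nontriviality 𝔸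
  let _ : NormedAlgebra ℚ 𝔸 := .restrictScalars ℚ ℝ 𝔸
  exact (CStarRing.norm_of_mem_unitary (exp_mem_unitary_of_mem_skewAdjoint ha)).le

theorem norm_exp_sub_exp_le_of_mem_skewAdjoint [StarModule ℝ 𝔸] {a b : 𝔸}
    (ha : a ∈ skewAdjoint 𝔸) (hb : b ∈ skewAdjoint 𝔸) : ‖exp a - exp b‖ ≤ ‖a - b‖ := by
  have hderiv (t : ℝ) : HasDerivAt (fun t : ℝ => exp (t • a) * exp ((1 - t) • b))
      (exp (t • a) * (a - b) * exp ((1 - t) • b)) t := by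
    have hb' := (hasDerivAt_exp_smul_const' (𝕂 := ℝ) b (1 - t)).scomp t
      ((hasDerivAt_id t).const_sub 1)
    refine ((hasDerivAt_exp_smul_const a t).mul hb').congr_deriv ?_
    simp only [Function.comp_apply, neg_smul, one_smul]
    noncomm_ring
  have hbound (t : ℝ) (_ : t ∈ Set.Ico (0 : ℝ) 1) :
      ‖exp (t • a) * (a - b) * exp ((1 - t) • b)‖ ≤ ‖a - b‖ := calc
    _ ≤ ‖exp (t • a)‖ * ‖a - b‖ * ‖exp ((1 - t) • b)‖ := norm_mul₃_le
    _ ≤ 1 * ‖a - b‖ * 1 := by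
      gcongr
      · exact norm_exp_le_one_of_mem_skewAdjoint (skewAdjoint.smul_mem t ha)
      · exact norm_exp_le_one_of_mem_skewAdjoint (skewAdjoint.smul_mem _ hb)
    _ = ‖a - b‖ := by ring
  simpa using norm_image_sub_le_of_norm_deriv_le_segment_01'
    (fun t _ => (hderiv t).hasDerivWithinAt) hbound

end SkewAdjoint

theorem EuclideanSpace.norm_sq_eq_dotProduct {ι : Type*} [Fintype ι]
    (x : EuclideanSpace ℝ ι) : ‖x‖ ^ 2 = x.ofLp ⬝ᵥ x.ofLp := by
  rw [← real_inner_self_eq_norm_sq, EuclideanSpace.inner_eq_star_dotProduct, star_trivial]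

section Rotations

def skewCLM (r : E3) : E3 →L[ℝ] E3 := Matrix.toEuclideanCLM (𝕜 := ℝ) (skew r)

theorem skew_mulVec (r x : E3) : skew r *ᵥ x.ofLp = r.ofLp ⨯₃ x.ofLp := by
  ext i
  fin_cases i <;>
    simp [skew, cross_apply, Matrix.mulVec, dotProduct, Fin.sum_univ_three] <;> ring

theorem skew_sub (a b : E3) : skew (a - b) = skew a - skew b := by
  ext i j
  fin_cases i <;> fin_cases j <;> simp [skew] <;> ring

theorem skew_conjTranspose (r : E3) : (skew r)ᴴ = -skew r := by
  ext i j
  fin_cases i <;> fin_cases j <;> simp [skew]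

theorem skewCLM_sub (a b : E3) : skewCLM (a - b) = skewCLM a - skewCLM b := by
  rw [skewCLM, skew_sub, map_sub, skewCLM, skewCLM]

theorem skewCLM_mem_skewAdjoint (r : E3) : skewCLM r ∈ skewAdjoint (E3 →L[ℝ] E3) := by
  rw [skewAdjoint.mem_iff, skewCLM, ← map_star, Matrix.star_eq_conjTranspose, skew_conjTranspose,
    map_neg]

theorem norm_skewCLM_apply_le (r x : E3) : ‖skewCLM r x‖ ≤ ‖r‖ * ‖x‖ := by
  refine (pow_le_pow_iff_left₀ (norm_nonneg _) (by positivity) two_ne_zero).1 ?_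
  rw [mul_pow, EuclideanSpace.norm_sq_eq_dotProduct, EuclideanSpace.norm_sq_eq_dotProduct,
    EuclideanSpace.norm_sq_eq_dotProduct, skewCLM, Matrix.ofLp_toEuclideanCLM, skew_mulVec,
    cross_dot_cross, dotProduct_comm x.ofLp r.ofLp]
  exact sub_le_self _ (mul_self_nonneg _)

theorem norm_skewCLM_le (r : E3) : ‖skewCLM r‖ ≤ ‖r‖ :=
  (skewCLM r).opNorm_le_bound (norm_nonneg r) (norm_skewCLM_apply_le r)

attribute [local instance] Matrix.linftyOpNormedRing Matrix.linftyOpNormedAlgebra in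
theorem rotApply_axisAngleRot (r x : E3) : rotApply (axisAngleRot r) x = exp (skewCLM r) x :=
  congrArg (· x) <| map_exp (Matrix.toEuclideanCLM (𝕜 := ℝ) (n := Fin 3))
    (LinearMap.continuous_of_finiteDimensional
      (Matrix.toEuclideanCLM (𝕜 := ℝ) (n := Fin 3)).toAlgEquiv.toLinearMap) (skew r)

theorem exp_skewCLM_mem_unitary (r : E3) : exp (skewCLM r) ∈ unitary (E3 →L[ℝ] E3) := by
  let _ : NormedAlgebra ℚ (E3 →L[ℝ] E3) := .restrictScalars ℚ ℝ _
  exact exp_mem_unitary_of_mem_skewAdjoint (skewCLM_mem_skewAdjoint r)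

theorem norm_rotApply_axisAngleRot (r x : E3) : ‖rotApply (axisAngleRot r) x‖ = ‖x‖ := by
  rw [rotApply_axisAngleRot,
    ContinuousLinearMap.norm_map_of_mem_unitary (exp_skewCLM_mem_unitary r)]

theorem lipschitzWith_rotApply_axisAngleRot (x : E3) :
    LipschitzWith ‖x‖₊ fun r => rotApply (axisAngleRot r) x := by
  refine LipschitzWith.of_dist_le_mul fun a b => ?_
  simp only [rotApply_axisAngleRot, dist_eq_norm, coe_nnnorm]
  calc ‖exp (skewCLM a) x - exp (skewCLM b) x‖
      ≤ ‖exp (skewCLM a) - exp (skewCLM b)‖ * ‖x‖ :=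
        (exp (skewCLM a) - exp (skewCLM b)).le_opNorm x
    _ ≤ ‖skewCLM (a - b)‖ * ‖x‖ := by
      rw [skewCLM_sub]
      gcongr
      exact norm_exp_sub_exp_le_of_mem_skewAdjoint (skewCLM_mem_skewAdjoint a)
        (skewCLM_mem_skewAdjoint b)
    _ ≤ ‖x‖ * ‖a - b‖ := by rw [mul_comm]; gcongr; exact norm_skewCLM_le _

theorem angle_rotApply_axisAngleRot_le {x : E3} (hx : ‖x‖ = 1) (r u : E3) :
    angle (rotApply (axisAngleRot r) x) (rotApply (axisAngleRot u) x) ≤ dist r u := by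
  have hγ := (lipschitzWith_rotApply_axisAngleRot x).comp
    (lipschitzWith_lineMap (𝕜 := ℝ) r u)
  simpa [hx, Function.comp_def, norm_rotApply_axisAngleRot] using
    angle_le_of_lipschitzWith (fun t => by simp [norm_rotApply_axisAngleRot, hx]) hγ

end Rotations

theorem upper_bound_Q_ang_general (N M : ℕ) (s : Fin N → E3) (c : Fin M → E3)
    (hs : ∀ i, ‖s i‖ = 1)
    (αε : ℝ)
    (B : Set E3) (u : E3) (αB : ℝ) (hB : ∀ r ∈ B, ‖r - u‖ ≤ αB) :
    ∀ r ∈ B,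
      (∑ i : Fin N, Finset.univ.sup fun j : Fin M =>
          if angle (rotApply (axisAngleRot r) (s i)) (c j) ≤ αε then (1 : ℕ) else 0) ≤
      ∑ i : Fin N, Finset.univ.sup fun j : Fin M =>
          if angle (rotApply (axisAngleRot u) (s i)) (c j) ≤ αε + αB then (1 : ℕ) else 0 := by
  intro r hr
  have hclose {x y : E3} (hx : ‖x‖ = 1) (hxy : angle (rotApply (axisAngleRot r) x) y ≤ αε) :
      angle (rotApply (axisAngleRot u) x) y ≤ αε + αB := calc
    _ ≤ angle (rotApply (axisAngleRot u) x) (rotApply (axisAngleRot r) x)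
        + angle (rotApply (axisAngleRot r) x) y := angle_le_angle_add_angle _ _ _
    _ ≤ ‖r - u‖ + αε := by
        rw [← dist_eq_norm, dist_comm]
        gcongr
        exact angle_rotApply_axisAngleRot_le hx u r
    _ ≤ αε + αB := by linarith [hB r hr]
  gcongr with i _ j
  by_cases h : angle (rotApply (axisAngleRot r) (s i)) (c j) ≤ αε
  · simp [h, hclose (hs i) h]
  · simp [h]

/-- The bound `Q̄(B)` dominates `Q(R_r)` for every rotation `R_r` with `r` in the cube `B`,
i.e. `Q̄(B) ≥ max_{r ∈ B} Q(R_r)`. -/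
theorem upper_bound_Q_ang (N M : ℕ) (s : Fin N → E3) (c : Fin M → E3)
    (hs : ∀ i, ‖s i‖ = 1) (hc : ∀ j, ‖c j‖ = 1)
    (αε : ℝ) (hαε : 0 < αε)
    (B : Set E3) (u : E3) (αB : ℝ) (hB : ∀ r ∈ B, ‖r - u‖ ≤ αB) :
    ∀ r ∈ B,
      (∑ i : Fin N, Finset.univ.sup fun j : Fin M =>
          if angle (rotApply (axisAngleRot r) (s i)) (c j) ≤ αε then (1 : ℕ) else 0) ≤
      ∑ i : Fin N, Finset.univ.sup fun j : Fin M =>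
          if angle (rotApply (axisAngleRot u) (s i)) (c j) ≤ αε + αB then (1 : ℕ) else 0 :=
  upper_bound_Q_ang_general N M s c hs αε B u αB hB
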